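/- arXiv:2510.12921 — 2 statements merged into one kernel-verified Lean document; each statement's English description precedes it below -/
import Mathlib

section
/- For complex numbers α₁, α₂ with Re(α₁+α₂) > 1 and σ₁, σ₂ with Re(σ₁) > 0, Re(σ₂) > 0, the integral ∫_{-∞}^{∞} (1+iσ₁t)^{-α₁} (1+iσ₂t)^{-α₂} dt equals 0. -/
/-!
On the closed lower half-plane each base `1 + iσz` stays in the slit plane (multiplying it by
`conj σ` gives a number of real part `≥ Re σ > 0`), so the integrand `f` is holomorphic there, and
`|1 + iσz|` is comparable to `1 + |z|`, so `|f z| = O((1 + |z|) ^ (-Re (α₁ + α₂)))`. By Cauchy's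
theorem on rectangles the integral of `f` along the line `Im z = y` does not depend on `y ≤ 0`,
and by dominated convergence it tends to `0` as `y → -∞`.
-/

open MeasureTheory Complex

open Filter Topology Set
open scoped ComplexConjugate Interval

lemma integrable_of_norm_le_one_add_abs_rpow {E : Type*} [NormedAddCommGroup E]
    [NormedSpace ℝ E] {g : ℝ → E} {K p : ℝ} (hg : Continuous g) (hp : 1 < p)
    (hbound : ∀ t, ‖g t‖ ≤ K * (1 + |t|) ^ (-p)) : Integrable g :=
  ((integrable_one_add_norm (μ := volume) (by simpa using hp)).const_mul K).mono'
    hg.aestronglyMeasurable (ae_of_all _ fun t => by simpa using hbound t)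

lemma tendsto_one_add_abs_rpow_neg_cocompact {p : ℝ} (hp : 0 < p) :
    Tendsto (fun x : ℝ => (1 + |x|) ^ (-p)) (cocompact ℝ) (𝓝 0) :=
  (tendsto_rpow_neg_atTop hp).comp <| tendsto_atTop_add_const_left _ 1 <|
    tendsto_norm_cocompact_atTop.congr Real.norm_eq_abs

lemma mul_one_add_rpow_neg_le_of_le {K p a b : ℝ} (hK : 0 ≤ K) (hp : 0 ≤ p) (ha : 0 ≤ a)
    (hab : a ≤ b) : K * (1 + b) ^ (-p) ≤ K * (1 + a) ^ (-p) :=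
  mul_le_mul_of_nonneg_left (Real.rpow_le_rpow_of_nonpos (by positivity) (by linarith)
    (by linarith)) hK

lemma Real.rpow_le_max_mul_rpow {x A C D : ℝ} (r : ℝ) (hx : 0 < x) (hA : 0 < A)
    (hAC : A ≤ C * x) (hxD : x ≤ D * A) : x ^ r ≤ max (D ^ r) (C ^ (-r)) * A ^ r := by
  have hC : 0 < C := pos_of_mul_pos_left (hA.trans_le hAC) hx.le
  have hD : 0 < D := pos_of_mul_pos_left (hx.trans_le hxD) hA.le
  rcases le_total 0 r with hr | hr
  · calc x ^ r ≤ (D * A) ^ r := Real.rpow_le_rpow hx.le hxD hr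
      _ = D ^ r * A ^ r := Real.mul_rpow hD.le hA.le
      _ ≤ _ := by gcongr; exact le_max_left _ _
  · calc x ^ r ≤ (C⁻¹ * A) ^ r :=
          Real.rpow_le_rpow_of_nonpos (by positivity) (by rwa [inv_mul_le_iff₀ hC]) hr
      _ = C ^ (-r) * A ^ r := by
          rw [Real.mul_rpow (by positivity) hA.le, Real.inv_rpow hC.le, Real.rpow_neg hC.le]
      _ ≤ _ := by gcongr; exact le_max_right _ _

lemma Complex.norm_cpow_le_rpow_mul_exp (z w : ℂ) :
    ‖z ^ w‖ ≤ ‖z‖ ^ w.re * Real.exp (Real.pi * |w.im|) := by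
  refine (norm_cpow_le z w).trans ?_
  rw [div_eq_mul_inv, ← Real.exp_neg]
  gcongr
  calc -(z.arg * w.im) ≤ |z.arg| * |w.im| := by rw [← abs_mul]; exact neg_le_abs _
    _ ≤ Real.pi * |w.im| := by gcongr; exact abs_arg_le_pi z

section ContourShift

variable {E : Type*} [NormedAddCommGroup E] [NormedSpace ℂ E]

lemma tendsto_intervalIntegral_add_mul_I_cocompact {f : ℂ → E} {y₁ y₂ K p : ℝ} (hp : 0 < p)
    (hbound : ∀ z : ℂ, z.im ∈ [[y₁, y₂]] → ‖f z‖ ≤ K * (1 + |z.re|) ^ (-p)) :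
    Tendsto (fun x : ℝ => ∫ y in y₁..y₂, f (x + y * I)) (cocompact ℝ) (𝓝 0) := by
  refine squeeze_zero_norm (fun x => ?_)
    (by simpa using ((tendsto_one_add_abs_rpow_neg_cocompact hp).const_mul K).mul_const |y₂ - y₁|)
  refine intervalIntegral.norm_integral_le_of_norm_le_const fun y hy => ?_
  simpa using hbound (x + y * I) (by simpa using uIoc_subset_uIcc hy)

theorem integral_add_mul_I_eq_of_differentiableOn [CompleteSpace E] {f : ℂ → E} {y₁ y₂ K p : ℝ}
    (hp : 1 < p) (hf : DifferentiableOn ℂ f (im ⁻¹' [[y₁, y₂]]))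
    (hbound : ∀ z : ℂ, z.im ∈ [[y₁, y₂]] → ‖f z‖ ≤ K * (1 + |z.re|) ^ (-p)) :
    ∫ x : ℝ, f (x + y₁ * I) = ∫ x : ℝ, f (x + y₂ * I) := by
  have hline : ∀ y ∈ [[y₁, y₂]], Integrable fun x : ℝ => f (x + y * I) := fun y hy =>
    integrable_of_norm_le_one_add_abs_rpow
      (hf.continuousOn.comp_continuous (by fun_prop) fun x => by simpa using hy) hp
      fun x => by simpa using hbound (x + y * I) (by simpa using hy)
  have hrect : ∀ R : ℝ, ((∫ x in -R..R, f (x + y₁ * I)) - ∫ x in -R..R, f (x + y₂ * I)) +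
      I • (∫ y in y₁..y₂, f (R + y * I)) - I • (∫ y in y₁..y₂, f (-R + y * I)) = 0 := fun R => by
    simpa using integral_boundary_rect_eq_zero_of_differentiableOn f (-R + y₁ * I) (R + y₂ * I)
      (hf.mono fun z hz => by simpa using hz.2)
  have hvert := tendsto_intervalIntegral_add_mul_I_cocompact (f := f) (by linarith) hbound
  have hlim := (((intervalIntegral_tendsto_integral (hline y₁ left_mem_uIcc)
    tendsto_neg_atTop_atBot tendsto_id).sub (intervalIntegral_tendsto_integral
    (hline y₂ right_mem_uIcc) tendsto_neg_atTop_atBot tendsto_id)).add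
    ((hvert.mono_left atTop_le_cocompact).const_smul I)).sub
    (((hvert.mono_left atBot_le_cocompact).comp tendsto_neg_atTop_atBot).const_smul I)
  have hzero : Tendsto (fun _ : ℝ => (0 : E)) atTop _ := hlim.congr fun R => by simpa using hrect R
  exact sub_eq_zero.mp (by simpa using (tendsto_nhds_unique tendsto_const_nhds hzero).symm)

lemma tendsto_integral_add_mul_I_atBot {f : ℂ → E} {K p : ℝ} (hp : 1 < p)
    (hf : ContinuousOn f {z | z.im ≤ 0})
    (hbound : ∀ z : ℂ, z.im ≤ 0 → ‖f z‖ ≤ K * (1 + ‖z‖) ^ (-p)) :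
    Tendsto (fun y : ℝ => ∫ x : ℝ, f (x + y * I)) atBot (𝓝 0) := by
  have hK : 0 ≤ K := (norm_nonneg _).trans (by simpa using hbound 0 le_rfl)
  have hle : ∀ᶠ y : ℝ in atBot, ∀ x : ℝ, ‖f (x + y * I)‖ ≤ K * (1 + |x|) ^ (-p) := by
    filter_upwards [eventually_le_atBot 0] with y hy x
    exact (hbound _ (by simpa using hy)).trans (mul_one_add_rpow_neg_le_of_le hK (by linarith)
      (abs_nonneg x) (by simpa using abs_re_le_norm (x + y * I)))
  have hsmall : ∀ x : ℝ, Tendsto (fun y : ℝ => f (x + y * I)) atBot (𝓝 0) := by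
    intro x
    refine squeeze_zero_norm' ?_ (by simpa using ((tendsto_one_add_abs_rpow_neg_cocompact
      (show 0 < p by linarith)).mono_left atBot_le_cocompact).const_mul K)
    filter_upwards [eventually_le_atBot 0] with y hy
    exact (hbound _ (by simpa using hy)).trans (mul_one_add_rpow_neg_le_of_le hK (by linarith)
      (abs_nonneg y) (by simpa using abs_im_le_norm (x + y * I)))
  have hmeas : ∀ᶠ y : ℝ in atBot, AEStronglyMeasurable (fun x : ℝ => f (x + y * I)) := by
    filter_upwards [eventually_le_atBot 0] with y hy
    exact (hf.comp_continuous (by fun_prop) fun x => by simpa using hy).aestronglyMeasurable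
  simpa using tendsto_integral_filter_of_dominated_convergence _ hmeas
    (hle.mono fun y hy => ae_of_all _ hy)
    ((integrable_one_add_norm (μ := volume) (by simpa using hp)).const_mul K) (ae_of_all _ hsmall)

theorem integral_eq_zero_of_differentiableOn_im_nonpos [CompleteSpace E] {f : ℂ → E} {K p : ℝ}
    (hp : 1 < p) (hf : DifferentiableOn ℂ f {z | z.im ≤ 0})
    (hbound : ∀ z : ℂ, z.im ≤ 0 → ‖f z‖ ≤ K * (1 + ‖z‖) ^ (-p)) :
    ∫ x : ℝ, f x = 0 := by
  have hK : 0 ≤ K := (norm_nonneg _).trans (by simpa using hbound 0 le_rfl)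
  have hshift : ∀ y : ℝ, y ≤ 0 → ∫ x : ℝ, f (x + y * I) = ∫ x : ℝ, f x := fun y hy => by
    have hstrip : ∀ z : ℂ, z.im ∈ [[y, 0]] → z.im ≤ 0 := fun z hz => by
      rw [uIcc_of_le hy] at hz
      exact hz.2
    simpa using integral_add_mul_I_eq_of_differentiableOn (y₁ := y) (y₂ := 0) hp
      (hf.mono fun z hz => hstrip z hz) fun z hz => (hbound z (hstrip z hz)).trans
        (mul_one_add_rpow_neg_le_of_le hK (by linarith) (abs_nonneg _) (abs_re_le_norm z))
  exact tendsto_nhds_unique ((tendsto_const_nhds (x := ∫ x : ℝ, f x)).congr'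
    ((eventually_le_atBot 0).mono fun y hy => (hshift y hy).symm))
    (tendsto_integral_add_mul_I_atBot hp hf.continuousOn hbound)

end ContourShift

lemma re_conj_mul_one_add_I_mul_mul (σ z : ℂ) :
    (conj σ * (1 + I * σ * z)).re = σ.re - normSq σ * z.im := by
  simp only [mul_re, mul_im, conj_re, conj_im, add_re, add_im, one_re, one_im, I_re, I_im,
    normSq_apply]
  ring

lemma re_le_norm_mul_norm_one_add_I_mul_mul {σ z : ℂ} (hz : z.im ≤ 0) :
    σ.re ≤ ‖σ‖ * ‖1 + I * σ * z‖ :=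
  calc σ.re ≤ (conj σ * (1 + I * σ * z)).re := by
        rw [re_conj_mul_one_add_I_mul_mul]; nlinarith [normSq_nonneg σ]
    _ ≤ ‖conj σ * (1 + I * σ * z)‖ := re_le_norm _
    _ = ‖σ‖ * ‖1 + I * σ * z‖ := by rw [norm_mul, norm_conj]

lemma one_add_I_mul_mul_mem_slitPlane {σ z : ℂ} (hσ : 0 < σ.re) (hz : z.im ≤ 0) :
    1 + I * σ * z ∈ slitPlane := by
  rw [mem_slitPlane_iff, or_iff_not_imp_right, not_not]
  intro him
  have hre := re_conj_mul_one_add_I_mul_mul σ z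
  rw [mul_re, him, mul_zero, sub_zero, conj_re] at hre
  have : 0 < σ.re * (1 + I * σ * z).re := by rw [hre]; nlinarith [normSq_nonneg σ]
  exact pos_of_mul_pos_right this hσ.le

lemma one_add_norm_le_mul_norm_one_add_I_mul_mul {σ z : ℂ} (hσ : 0 < σ.re) (hz : z.im ≤ 0) :
    1 + ‖z‖ ≤ (‖σ‖⁻¹ + (1 + ‖σ‖) / σ.re) * ‖1 + I * σ * z‖ := by
  set W := ‖1 + I * σ * z‖
  have hσ0 : 0 < ‖σ‖ := hσ.trans_le (re_le_norm σ)
  have hW : σ.re ≤ ‖σ‖ * W := re_le_norm_mul_norm_one_add_I_mul_mul hz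
  have hz' : ‖σ‖ * ‖z‖ ≤ W + 1 := by simpa [norm_mul] using norm_sub_le (1 + I * σ * z) 1
  calc 1 + ‖z‖ ≤ ‖σ‖⁻¹ * W + (1 + ‖σ‖⁻¹) * 1 := by
        have : ‖z‖ ≤ ‖σ‖⁻¹ * (W + 1) := by rw [le_inv_mul_iff₀ hσ0]; exact hz'
        linarith
    _ ≤ ‖σ‖⁻¹ * W + (1 + ‖σ‖⁻¹) * (‖σ‖ * W / σ.re) := by
        gcongr; rwa [le_div_iff₀ hσ, one_mul]
    _ = _ := by field_simp; ring

lemma norm_one_add_I_mul_mul_le (σ z : ℂ) : ‖1 + I * σ * z‖ ≤ (1 + ‖σ‖) * (1 + ‖z‖) :=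
  calc ‖1 + I * σ * z‖ ≤ 1 + ‖σ‖ * ‖z‖ := by simpa [norm_mul] using norm_add_le 1 (I * σ * z)
    _ ≤ (1 + ‖σ‖) * (1 + ‖z‖) := by nlinarith [norm_nonneg σ, norm_nonneg z]

lemma exists_norm_one_add_I_mul_mul_cpow_le {σ : ℂ} (hσ : 0 < σ.re) (β : ℂ) :
    ∃ M : ℝ, ∀ z : ℂ, z.im ≤ 0 → ‖(1 + I * σ * z) ^ β‖ ≤ M * (1 + ‖z‖) ^ β.re := by
  set C := ‖σ‖⁻¹ + (1 + ‖σ‖) / σ.re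
  refine ⟨max ((1 + ‖σ‖) ^ β.re) (C ^ (-β.re)) * Real.exp (Real.pi * |β.im|), fun z hz => ?_⟩
  have hw : 0 < ‖1 + I * σ * z‖ :=
    norm_pos_iff.mpr (slitPlane_ne_zero (one_add_I_mul_mul_mem_slitPlane hσ hz))
  calc ‖(1 + I * σ * z) ^ β‖ ≤ ‖1 + I * σ * z‖ ^ β.re * Real.exp (Real.pi * |β.im|) :=
        norm_cpow_le_rpow_mul_exp _ _
    _ ≤ max ((1 + ‖σ‖) ^ β.re) (C ^ (-β.re)) * (1 + ‖z‖) ^ β.re * Real.exp (Real.pi * |β.im|) := by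
        gcongr
        exact Real.rpow_le_max_mul_rpow _ hw (by positivity)
          (one_add_norm_le_mul_norm_one_add_I_mul_mul hσ hz)
          (norm_one_add_I_mul_mul_le σ z)
    _ = _ := by ring

lemma differentiableAt_one_add_I_mul_mul_cpow {σ z : ℂ} (hσ : 0 < σ.re) (hz : z.im ≤ 0)
    (β : ℂ) : DifferentiableAt ℂ (fun z => (1 + I * σ * z) ^ β) z :=
  (by fun_prop : DifferentiableAt ℂ (fun z => 1 + I * σ * z) z).cpow_const
    (one_add_I_mul_mul_mem_slitPlane hσ hz)

theorem cauchy_beta_integral_vanishing (α₁ α₂ σ₁ σ₂ : ℂ)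
    (hα : 1 < (α₁ + α₂).re) (hσ₁ : 0 < σ₁.re) (hσ₂ : 0 < σ₂.re) :
    ∫ t : ℝ, (1 + Complex.I * σ₁ * t) ^ (-α₁) * (1 + Complex.I * σ₂ * t) ^ (-α₂) = 0 := by
  obtain ⟨M₁, hM₁⟩ := exists_norm_one_add_I_mul_mul_cpow_le hσ₁ (-α₁)
  obtain ⟨M₂, hM₂⟩ := exists_norm_one_add_I_mul_mul_cpow_le hσ₂ (-α₂)
  refine integral_eq_zero_of_differentiableOn_im_nonpos (K := M₁ * M₂) hα
    (fun z hz => ((differentiableAt_one_add_I_mul_mul_cpow hσ₁ hz _).mul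
      (differentiableAt_one_add_I_mul_mul_cpow hσ₂ hz _)).differentiableWithinAt) fun z hz => ?_
  calc ‖(1 + I * σ₁ * z) ^ (-α₁) * (1 + I * σ₂ * z) ^ (-α₂)‖
      ≤ M₁ * (1 + ‖z‖) ^ (-α₁).re * (M₂ * (1 + ‖z‖) ^ (-α₂).re) := by
        rw [norm_mul]
        exact mul_le_mul (hM₁ z hz) (hM₂ z hz) (norm_nonneg _) ((norm_nonneg _).trans (hM₁ z hz))
    _ = M₁ * M₂ * (1 + ‖z‖) ^ (-(α₁ + α₂).re) := by
        rw [mul_mul_mul_comm, ← Real.rpow_add (by positivity)]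
        rw [neg_re, neg_re, add_re, neg_add]
end

section
/- For real ν > 0 and t > 0, the modified Bessel function of the second kind satisfies Basset's integral: K_ν(t) = π^{-1/2} Γ(ν+1/2) (2/t)^ν ∫₀^∞ (1+x²)^{-(ν+1/2)} cos(tx) dx. -/
/-!
Both sides equal `(2 / t) ^ ν / 2 * ∫₀^∞ s ^ (ν - 1) * exp (-s - t ^ 2 / (4 * s)) ds`.
For `K_ν`, extend the integral to `ℝ` by evenness, replace `cosh (ν u)` by `exp (ν u)`, and
substitute `s = (t / 2) * exp u`, which turns `t * cosh u` into `s + t ^ 2 / (4 * s)`.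
For Basset's integral, write `(1 + x ^ 2) ^ (-(ν + 1 / 2))` as the Gamma integral
`Γ(ν + 1 / 2)⁻¹ * ∫₀^∞ s ^ (ν - 1 / 2) * exp (-((1 + x ^ 2) * s)) ds`, swap the two integrals, and
evaluate the inner one by the Fourier transform of the Gaussian,
`∫₀^∞ exp (-s * x ^ 2) * cos (t * x) dx = √(π / s) * exp (-t ^ 2 / (4 * s)) / 2`.
-/

open MeasureTheory

/-- The modified Bessel function of the second kind `K_ν(t)`, via its standard
integral representation for `t > 0`. -/
noncomputable def besselK (ν t : ℝ) : ℝ :=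
  ∫ u in Set.Ioi (0:ℝ), Real.exp (-t * Real.cosh u) * Real.cosh (ν * u)

open Real Set

lemma integral_exp_neg_mul_sq_mul_cos {b : ℝ} (hb : 0 < b) (t : ℝ) :
    ∫ x, exp (-b * x ^ 2) * cos (t * x) = √(π / b) * exp (-t ^ 2 / (4 * b)) := by
  have hb' : 0 < (b : ℂ).re := by simpa using hb
  have integrand (x : ℝ) : Complex.exp (Complex.I * t * x) * Complex.exp (-b * x ^ 2) =
      (exp (-b * x ^ 2) : ℂ) * Complex.exp ((t * x : ℝ) * Complex.I) := by
    push_cast; ring_nf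
  have value : (π / b : ℂ) ^ (1 / 2 : ℂ) * Complex.exp (-t ^ 2 / (4 * b)) =
      ((√(π / b) * exp (-t ^ 2 / (4 * b)) : ℝ) : ℂ) := by
    rw [sqrt_eq_rpow, Complex.ofReal_mul, Complex.ofReal_cpow (by positivity), Complex.ofReal_exp]
    push_cast; rfl
  have hf : Integrable fun x : ℝ =>
      (exp (-b * x ^ 2) : ℂ) * Complex.exp ((t * x : ℝ) * Complex.I) :=
    (integrable_cexp_quadratic hb' (Complex.I * t) 0).congr <| .of_forall fun x => by
      dsimp only; rw [← integrand, ← Complex.exp_add]; ring_nf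
  have h := congrArg Complex.re (fourierIntegral_gaussian hb' t)
  simp_rw [integrand, value, Complex.ofReal_re] at h
  rw [← h, ← RCLike.re_to_complex, ← integral_re hf]
  congr 1 with x
  rw [RCLike.re_to_complex, Complex.re_ofReal_mul, Complex.exp_ofReal_mul_I_re]

lemma integral_Ioi_exp_neg_mul_sq_mul_cos {b : ℝ} (hb : 0 < b) (t : ℝ) :
    ∫ x in Ioi 0, exp (-b * x ^ 2) * cos (t * x) = √(π / b) * exp (-t ^ 2 / (4 * b)) / 2 := by
  have h := integral_comp_abs (f := fun x => exp (-b * x ^ 2) * cos (t * x))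
  have cos_abs (x : ℝ) : cos (t * |x|) = cos (t * x) := by
    rcases abs_choice x with hx | hx <;> simp [hx]
  simp only [sq_abs, cos_abs, integral_exp_neg_mul_sq_mul_cos hb] at h
  linarith

section ExpSubstitution

variable {E : Type*} [NormedAddCommGroup E] [NormedSpace ℝ E] {c : ℝ}

lemma image_univ_const_mul_exp (hc : 0 < c) : (fun u => c * exp u) '' univ = Ioi 0 := by
  rw [image_univ]
  ext s
  refine ⟨fun ⟨u, hu⟩ => hu ▸ mul_pos hc (exp_pos u), fun hs => ⟨log (s / c), ?_⟩⟩
  simp only [exp_log (div_pos hs hc), mul_div_cancel₀ _ hc.ne']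

lemma hasDerivWithinAt_const_mul_exp (c u : ℝ) :
    HasDerivWithinAt (fun u => c * exp u) (c * exp u) univ u :=
  ((hasDerivAt_exp u).const_mul c).hasDerivWithinAt

lemma injOn_const_mul_exp (hc : 0 < c) : InjOn (fun u => c * exp u) univ :=
  fun _ _ _ _ h => exp_injective (mul_left_cancel₀ hc.ne' h)

lemma integral_const_mul_exp_smul_comp (hc : 0 < c) (g : ℝ → E) :
    ∫ u, (c * exp u) • g (c * exp u) = ∫ s in Ioi 0, g s := by
  have h := integral_image_eq_integral_abs_deriv_smul MeasurableSet.univ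
    (fun u _ => hasDerivWithinAt_const_mul_exp c u) (injOn_const_mul_exp hc) g
  rw [image_univ_const_mul_exp hc, setIntegral_univ] at h
  simp_rw [h, abs_of_pos (mul_pos hc (exp_pos _))]

lemma integrable_const_mul_exp_smul_comp_iff (hc : 0 < c) (g : ℝ → E) :
    Integrable (fun u => (c * exp u) • g (c * exp u)) ↔ IntegrableOn g (Ioi 0) := by
  have h := integrableOn_image_iff_integrableOn_abs_deriv_smul MeasurableSet.univ
    (fun u _ => hasDerivWithinAt_const_mul_exp c u) (injOn_const_mul_exp hc) g
  rw [image_univ_const_mul_exp hc, integrableOn_univ] at h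
  simp_rw [h, abs_of_pos (mul_pos hc (exp_pos _))]

end ExpSubstitution

lemma two_mul_besselK (ν t : ℝ) :
    2 * besselK ν t = ∫ u, exp (-t * cosh u) * cosh (ν * u) := by
  have cosh_abs (u : ℝ) : cosh (ν * |u|) = cosh (ν * u) := by
    rcases abs_choice u with hu | hu <;> simp [hu]
  rw [besselK, ← integral_comp_abs (f := fun u => exp (-t * cosh u) * cosh (ν * u))]
  simp only [Real.cosh_abs, cosh_abs]

lemma integrableOn_rpow_mul_exp_neg_sub_div {ν : ℝ} (hν : 0 < ν) (t : ℝ) :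
    IntegrableOn (fun s => s ^ (ν - 1) * exp (-s - t ^ 2 / (4 * s))) (Ioi 0) := by
  refine (GammaIntegral_convergent hν).mono' (by fun_prop) ?_
  filter_upwards [self_mem_ae_restrict measurableSet_Ioi] with s (hs : 0 < s)
  rw [norm_of_nonneg (by positivity), mul_comm]
  gcongr
  linarith [show 0 ≤ t ^ 2 / (4 * s) by positivity]

lemma const_mul_exp_mul_rpow_mul_exp {t : ℝ} (ht : 0 < t) (ν u : ℝ) :
    (t / 2 * exp u) * ((t / 2 * exp u) ^ (ν - 1) *
        exp (-(t / 2 * exp u) - t ^ 2 / (4 * (t / 2 * exp u)))) =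
      (t / 2) ^ ν * (exp (-t * cosh u) * exp (ν * u)) := by
  have hs : 0 < t / 2 * exp u := by positivity
  have hexp : -(t / 2 * exp u) - t ^ 2 / (4 * (t / 2 * exp u)) = -t * cosh u := by
    rw [cosh_eq, exp_neg]
    field_simp
    ring
  have hpow : (t / 2 * exp u) * (t / 2 * exp u) ^ (ν - 1) = (t / 2) ^ ν * exp (ν * u) := by
    rw [mul_comm, ← rpow_add_one hs.ne', sub_add_cancel, mul_rpow (by positivity) (exp_pos u).le,
      ← exp_mul, mul_comm u]
  rw [← mul_assoc, hpow, hexp]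
  ring

lemma integral_exp_neg_mul_cosh_mul_exp {t : ℝ} (ht : 0 < t) (ν : ℝ) :
    ∫ u, exp (-t * cosh u) * exp (ν * u) =
      (2 / t) ^ ν * ∫ s in Ioi 0, s ^ (ν - 1) * exp (-s - t ^ 2 / (4 * s)) := by
  rw [← integral_const_mul_exp_smul_comp (by positivity : 0 < t / 2)]
  have h2t : 2 / t * (t / 2) = 1 := by field_simp
  simp_rw [smul_eq_mul, const_mul_exp_mul_rpow_mul_exp ht, integral_const_mul, ← mul_assoc,
    ← mul_rpow (by positivity : 0 ≤ 2 / t) (by positivity : 0 ≤ t / 2), h2t, one_rpow, one_mul]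

lemma integrable_exp_neg_mul_cosh_mul_exp {ν t : ℝ} (hν : 0 < ν) (ht : 0 < t) :
    Integrable fun u => exp (-t * cosh u) * exp (ν * u) := by
  have h := (integrable_const_mul_exp_smul_comp_iff (by positivity : 0 < t / 2) _).2
    (integrableOn_rpow_mul_exp_neg_sub_div hν t)
  simp_rw [smul_eq_mul, const_mul_exp_mul_rpow_mul_exp ht] at h
  exact (integrable_const_mul_iff (rpow_pos_of_pos (by positivity) ν).ne'.isUnit _).1 h

lemma besselK_eq_integral_rpow_mul_exp {ν t : ℝ} (hν : 0 < ν) (ht : 0 < t) :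
    besselK ν t = (2 / t) ^ ν / 2 * ∫ s in Ioi 0, s ^ (ν - 1) * exp (-s - t ^ 2 / (4 * s)) := by
  have hA := integrable_exp_neg_mul_cosh_mul_exp hν ht
  have hcosh (u : ℝ) : exp (-t * cosh u) * cosh (ν * u) =
      (exp (-t * cosh u) * exp (ν * u) + exp (-t * cosh (-u)) * exp (ν * -u)) / 2 := by
    rw [cosh_neg, cosh_eq (ν * u), mul_neg]
    ring
  have h := two_mul_besselK ν t
  simp_rw [hcosh] at h
  rw [integral_div, integral_add hA hA.comp_neg,
    integral_neg_eq_self (fun u => exp (-t * cosh u) * exp (ν * u)),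
    integral_exp_neg_mul_cosh_mul_exp ht] at h
  linarith

lemma rpow_neg_eq_integral {a r : ℝ} (ha : 0 < a) (hr : 0 < r) :
    r ^ (-a) = (Gamma a)⁻¹ * ∫ s in Ioi 0, s ^ (a - 1) * exp (-(r * s)) := by
  rw [integral_rpow_mul_exp_neg_mul_Ioi ha hr, one_div, inv_rpow hr.le, ← rpow_neg hr.le]
  field_simp [(Gamma_pos_of_pos ha).ne']

lemma rpow_sub_half_mul_sqrt_div {s : ℝ} (hs : 0 < s) (ν : ℝ) :
    s ^ (ν - 1 / 2) * √(π / s) = √π * s ^ (ν - 1) := by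
  rw [sqrt_div pi_pos.le, sqrt_eq_rpow s, mul_div_assoc', div_eq_mul_inv, ← rpow_neg hs.le,
    mul_right_comm, ← rpow_add hs]
  ring_nf

lemma exp_neg_one_add_sq_mul {s : ℝ} (x : ℝ) :
    exp (-((1 + x ^ 2) * s)) = exp (-s) * exp (-s * x ^ 2) := by
  rw [← exp_add]
  ring_nf

lemma integral_Ioi_rpow_mul_exp_mul_cos {s : ℝ} (hs : 0 < s) (ν t : ℝ) :
    ∫ x in Ioi 0, s ^ (ν - 1 / 2) * exp (-((1 + x ^ 2) * s)) * cos (t * x) =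
      √π / 2 * (s ^ (ν - 1) * exp (-s - t ^ 2 / (4 * s))) := by
  simp_rw [exp_neg_one_add_sq_mul, mul_assoc, integral_const_mul,
    integral_Ioi_exp_neg_mul_sq_mul_cos hs, sub_eq_add_neg (-s), exp_add, neg_div]
  linear_combination exp (-s) * exp (-(t ^ 2 / (4 * s))) / 2 * rpow_sub_half_mul_sqrt_div hs ν

lemma norm_rpow_mul_exp_mul_cos_le {s : ℝ} (hs : 0 < s) (ν t x : ℝ) :
    ‖s ^ (ν - 1 / 2) * exp (-((1 + x ^ 2) * s)) * cos (t * x)‖ ≤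
      s ^ (ν - 1 / 2) * exp (-s) * exp (-s * x ^ 2) := by
  rw [norm_mul, norm_of_nonneg (by positivity), exp_neg_one_add_sq_mul, ← mul_assoc]
  exact mul_le_of_le_one_right (by positivity) (abs_cos_le_one _)

lemma integrableOn_rpow_mul_exp_mul_cos {s : ℝ} (hs : 0 < s) (ν t : ℝ) :
    IntegrableOn (fun x => s ^ (ν - 1 / 2) * exp (-((1 + x ^ 2) * s)) * cos (t * x)) (Ioi 0) :=
  ((integrable_exp_neg_mul_sq hs).integrableOn.const_mul _).mono' (by fun_prop)
    (.of_forall (norm_rpow_mul_exp_mul_cos_le hs ν t))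

lemma integrable_rpow_mul_exp_mul_cos_prod {ν : ℝ} (hν : 0 < ν) (t : ℝ) :
    Integrable
      (Function.uncurry fun s x => s ^ (ν - 1 / 2) * exp (-((1 + x ^ 2) * s)) * cos (t * x))
      ((volume.restrict (Ioi 0)).prod (volume.restrict (Ioi 0))) := by
  have hF : AEStronglyMeasurable (Function.uncurry fun s x : ℝ =>
      s ^ (ν - 1 / 2) * exp (-((1 + x ^ 2) * s)) * cos (t * x))
      ((volume.restrict (Ioi 0)).prod (volume.restrict (Ioi 0))) :=
    Measurable.aestronglyMeasurable (by unfold Function.uncurry; fun_prop)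
  rw [integrable_prod_iff hF]
  refine ⟨ae_restrict_of_forall_mem measurableSet_Ioi fun s hs =>
    integrableOn_rpow_mul_exp_mul_cos hs ν t, ?_⟩
  refine ((GammaIntegral_convergent hν).const_mul (√π / 2)).mono' hF.norm.integral_prod_right' ?_
  refine ae_restrict_of_forall_mem measurableSet_Ioi fun s (hs : 0 < s) => ?_
  rw [norm_of_nonneg (integral_nonneg fun x => norm_nonneg _)]
  calc ∫ x in Ioi 0, ‖s ^ (ν - 1 / 2) * exp (-((1 + x ^ 2) * s)) * cos (t * x)‖
      ≤ ∫ x in Ioi 0, s ^ (ν - 1 / 2) * exp (-s) * exp (-s * x ^ 2) :=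
        setIntegral_mono (integrableOn_rpow_mul_exp_mul_cos hs ν t).norm
          ((integrable_exp_neg_mul_sq hs).integrableOn.const_mul _)
          (norm_rpow_mul_exp_mul_cos_le hs ν t)
    _ = √π / 2 * (exp (-s) * s ^ (ν - 1)) := by
        rw [integral_const_mul, integral_gaussian_Ioi]
        linear_combination exp (-s) / 2 * rpow_sub_half_mul_sqrt_div hs ν

lemma integral_one_add_sq_rpow_mul_cos {ν : ℝ} (hν : 0 < ν) (t : ℝ) :
    ∫ x in Ioi 0, (1 + x ^ 2) ^ (-(ν + 1 / 2)) * cos (t * x) =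
      (Gamma (ν + 1 / 2))⁻¹ * (√π / 2) *
        ∫ s in Ioi 0, s ^ (ν - 1) * exp (-s - t ^ 2 / (4 * s)) := by
  have hexp : ν + 1 / 2 - 1 = ν - 1 / 2 := by ring
  have gamma_repr (x : ℝ) : (1 + x ^ 2) ^ (-(ν + 1 / 2)) * cos (t * x) = (Gamma (ν + 1 / 2))⁻¹ *
      ∫ s in Ioi 0, s ^ (ν - 1 / 2) * exp (-((1 + x ^ 2) * s)) * cos (t * x) := by
    rw [rpow_neg_eq_integral (by linarith) (by positivity), hexp, integral_mul_const, mul_assoc]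
  simp_rw [gamma_repr, integral_const_mul,
    ← integral_integral_swap (integrable_rpow_mul_exp_mul_cos_prod hν t)]
  rw [setIntegral_congr_fun measurableSet_Ioi fun s hs => integral_Ioi_rpow_mul_exp_mul_cos hs ν t,
    integral_const_mul, mul_assoc]

theorem basset_integral (ν t : ℝ) (hν : 0 < ν) (ht : 0 < t) :
    besselK ν t =
      Real.pi ^ (-(1/2 : ℝ)) * Real.Gamma (ν + 1/2) * (2 / t) ^ ν *
        ∫ x in Set.Ioi (0:ℝ), (1 + x ^ 2) ^ (-(ν + 1/2)) * Real.cos (t * x) := by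
  rw [besselK_eq_integral_rpow_mul_exp hν ht, integral_one_add_sq_rpow_mul_cos hν t,
    rpow_neg pi_pos.le, ← sqrt_eq_rpow]
  generalize ∫ s in Ioi 0, s ^ (ν - 1) * exp (-s - t ^ 2 / (4 * s)) = I
  field_simp [(Gamma_pos_of_pos (by linarith : 0 < ν + 1 / 2)).ne', (sqrt_pos.2 pi_pos).ne']
end
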